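/- arXiv:2401.03649 — 5 statements merged into one kernel-verified Lean document; each statement's English description precedes it below -/
import Mathlib

section
/- Let θ > 0. The Fisher information of the zero-truncated Poisson family at θ equals c₁(θ)²/θ, i.e. ∑_{y=1}^{∞} (y/θ − exp(θ)/(exp(θ) − 1))² · θ^y/(y!·(exp(θ) − 1)) = (1 − (1 + θ)·exp(−θ)) / (θ·(1 − exp(−θ))²), where c₁(θ) = √(1 − (1 + θ)·exp(−θ)) / (1 − exp(−θ)). Consequently the Jeffreys prior of the zero-truncated Poisson model is c₁(θ)/√θ. -/
open Real

/-- Zero-truncated Poisson pmf with rate `θ`. -/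
noncomputable def truncPoissonPMF (θ : ℝ) (y : ℕ) : ℝ :=
  if y = 0 then 0 else θ ^ y / ((Nat.factorial y : ℝ) * (Real.exp θ - 1))

/-- `c₁(θ) = √(1 − (1 + θ)·exp(−θ)) / (1 − exp(−θ))`. -/
noncomputable def c₁ (θ : ℝ) : ℝ :=
  Real.sqrt (1 - (1 + θ) * Real.exp (-θ)) / (1 - Real.exp (-θ))

/-!
The zero-truncated Poisson weights are the Poisson weights `θ ^ y / y !` without the `y = 0`
term, renormalised by `exp θ - 1`; so `∑ g y * truncPoissonPMF θ y` is
`(∑ g y * θ ^ y / y ! - g 0) / (exp θ - 1)`. For the squared score `g y = (y / θ - c) ^ 2`,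
`c = exp θ / (exp θ - 1)`, the first two Poisson moments give the untruncated series as
`(1 / θ + (1 - c) ^ 2) * exp θ`, and `1 - c = -1 / (exp θ - 1)`; the rest is algebra. The square
root splits because `1 + θ ≤ exp θ` makes the numerator nonnegative.
-/

open Nat

lemma hasSum_pow_div_factorial (x : ℝ) : HasSum (fun n : ℕ ↦ x ^ n / n !) (exp x) := by
  simpa only [exp_eq_exp_ℝ] using NormedSpace.expSeries_div_hasSum_exp x

lemma hasSum_of_hasSum_succ {G : Type*} [AddCommGroup G] [TopologicalSpace G]
    [IsTopologicalAddGroup G] {f : ℕ → G} {a : G} (h0 : f 0 = 0)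
    (h : HasSum (fun n ↦ f (n + 1)) a) : HasSum f a := by
  simpa [h0] using (hasSum_nat_add_iff 1).mp h

lemma succ_mul_pow_succ_div_factorial (x : ℝ) (n : ℕ) :
    ((n + 1 : ℕ) : ℝ) * x ^ (n + 1) / (n + 1)! = x * (x ^ n / n !) := by
  have : (n ! : ℝ) ≠ 0 := by positivity
  push_cast [factorial_succ]
  field_simp
  ring

lemma hasSum_mul_pow_div_factorial (x : ℝ) :
    HasSum (fun n : ℕ ↦ n * x ^ n / n !) (x * exp x) := by
  refine hasSum_of_hasSum_succ (by simp) ?_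
  simpa only [succ_mul_pow_succ_div_factorial] using (hasSum_pow_div_factorial x).mul_left x

lemma hasSum_sq_mul_pow_div_factorial (x : ℝ) :
    HasSum (fun n : ℕ ↦ (n : ℝ) ^ 2 * x ^ n / n !) ((x ^ 2 + x) * exp x) := by
  refine hasSum_of_hasSum_succ (by simp) ?_
  have h := ((hasSum_mul_pow_div_factorial x).add (hasSum_pow_div_factorial x)).mul_left x
  rw [show (x ^ 2 + x) * exp x = x * (x * exp x + exp x) by ring]
  refine h.congr_fun fun n ↦ ?_
  rw [show ((n + 1 : ℕ) : ℝ) ^ 2 * x ^ (n + 1) / (n + 1)! =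
      (n + 1) * (((n + 1 : ℕ) : ℝ) * x ^ (n + 1) / (n + 1)!) by push_cast; ring,
    succ_mul_pow_succ_div_factorial]
  ring

-- For `N ~ Poisson(θ)` this is `E[(N/θ - c)²] = Var N / θ² + (1 - c)²`, scaled by `exp θ`.
lemma hasSum_sq_div_sub_mul_pow_div_factorial {θ : ℝ} (hθ : θ ≠ 0) (c : ℝ) :
    HasSum (fun n : ℕ ↦ ((n : ℝ) / θ - c) ^ 2 * (θ ^ n / n !))
      ((θ⁻¹ + (1 - c) ^ 2) * exp θ) := by
  have h := (((hasSum_sq_mul_pow_div_factorial θ).mul_left (θ ^ 2)⁻¹).sub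
    ((hasSum_mul_pow_div_factorial θ).mul_left (2 * c / θ))).add
    ((hasSum_pow_div_factorial θ).mul_left (c ^ 2))
  rw [show (θ⁻¹ + (1 - c) ^ 2) * exp θ = (θ ^ 2)⁻¹ * ((θ ^ 2 + θ) * exp θ)
      - 2 * c / θ * (θ * exp θ) + c ^ 2 * exp θ by field_simp; ring]
  refine h.congr_fun fun n ↦ ?_
  field_simp
  ring

lemma hasSum_mul_truncPoissonPMF {θ S : ℝ} {g : ℕ → ℝ}
    (h : HasSum (fun n : ℕ ↦ g n * (θ ^ n / n !)) S) :
    HasSum (fun n : ℕ ↦ g n * truncPoissonPMF θ n) ((S - g 0) / (exp θ - 1)) := by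
  refine ((h.sub (hasSum_ite_eq 0 (g 0))).div_const (exp θ - 1)).congr_fun fun n ↦ ?_
  rcases eq_or_ne n 0 with rfl | hn
  · simp [truncPoissonPMF]
  · simp only [truncPoissonPMF, hn, if_false, sub_zero, div_mul_eq_div_div]
    ring

lemma one_sub_one_add_mul_exp_neg_nonneg (x : ℝ) : 0 ≤ 1 - (1 + x) * exp (-x) := by
  have h : (1 + x) * exp (-x) ≤ exp x * exp (-x) := by
    gcongr
    linarith [add_one_le_exp x]
  rw [← exp_add, add_neg_cancel, exp_zero] at h
  linarith

lemma hasSum_truncPoisson_sq_score {θ : ℝ} (hθ : 0 < θ) :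
    HasSum (fun y : ℕ ↦ ((y : ℝ) / θ - exp θ / (exp θ - 1)) ^ 2 * truncPoissonPMF θ y)
      ((1 - (1 + θ) * exp (-θ)) / (θ * (1 - exp (-θ)) ^ 2)) := by
  convert hasSum_mul_truncPoissonPMF (hasSum_sq_div_sub_mul_pow_div_factorial hθ.ne' _) using 1
  have hE : exp θ - 1 ≠ 0 := by linarith [add_one_lt_exp hθ.ne']
  rw [exp_neg]
  field_simp
  ring

/-- The Fisher information of the zero-truncated Poisson family at `θ` equals
`c₁(θ)²/θ`, i.e. the expectation of the squared score is
`(1 − (1 + θ)·exp(−θ)) / (θ·(1 − exp(−θ))²)`; consequently, the Jeffreys prior of the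
zero-truncated Poisson model is `c₁(θ)/√θ`. -/
theorem truncated_poisson_fisher_information (θ : ℝ) (hθ : 0 < θ) :
    (∑' y : ℕ,
        ((y : ℝ) / θ - Real.exp θ / (Real.exp θ - 1)) ^ 2 * truncPoissonPMF θ y) =
      (1 - (1 + θ) * Real.exp (-θ)) / (θ * (1 - Real.exp (-θ)) ^ 2) ∧
    Real.sqrt ((1 - (1 + θ) * Real.exp (-θ)) / (θ * (1 - Real.exp (-θ)) ^ 2)) =
      c₁ θ / Real.sqrt θ := by
  refine ⟨(hasSum_truncPoisson_sq_score hθ).tsum_eq, ?_⟩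
  have hD : 0 < 1 - exp (-θ) := by linarith [exp_lt_one_iff.mpr (neg_neg_of_pos hθ)]
  rw [sqrt_div (one_sub_one_add_mul_exp_neg_nonneg θ), sqrt_mul hθ.le, sqrt_sq hD.le, c₁,
    div_div, mul_comm (1 - exp (-θ)), mul_comm (1 + θ)]
end

section
/- Let n ≥ 1 and let ϖ, φ be natural numbers with 0 ≤ ϖ < n and φ ≥ 1. Then the marginal likelihood integral of the zero-inflated Poisson model under the prior θ^{−1/2}·𝟙(0 < α < 1) satisfies ∫₀^{1} ∫₀^{∞} (α + (1 − α)·exp(−θ))^{ϖ} · (1 − α)^{n−ϖ} · exp(−(n − ϖ)·θ) · θ^{φ} · θ^{−1/2} dθ dα = (ϖ!/(n+1)!) · ∑_{j=0}^{ϖ} ((n−j)!/(ϖ−j)!) · Γ(φ + 1/2) · (n − j)^{−(φ + 1/2)}. -/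
open Real Finset MeasureTheory

/-!
Write `c = (1 - α) e^{-θ}`. The factor `(1 - α)^{n-ϖ} e^{-(n-ϖ)θ}` is `c^{n-ϖ}`, so the binomial
expansion of `(α + c)^ϖ` turns the integrand into a sum of terms
`binom(ϖ, k) α^k (1 - α)^{n-k} θ^{φ-1/2} e^{-(n-k)θ}`. Each `θ`-integral is a Gamma integral,
`Γ(φ + 1/2) (n - k)^{-(φ+1/2)}`, and each remaining `α`-integral is the Beta integral
`k! (n-k)! / (n+1)!`.
-/

theorem add_pow_mul_pow {R : Type*} [CommSemiring R] (a c : R) (p m : ℕ) :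
    (a + c) ^ p * c ^ m = ∑ k ∈ range (p + 1), p.choose k * a ^ k * c ^ (p - k + m) := by
  rw [add_pow, sum_mul]
  refine sum_congr rfl fun k _ => ?_
  rw [pow_add]
  ring

theorem integrableOn_rpow_mul_exp_neg_mul_Ioi {a r : ℝ} (ha : 0 < a) (hr : 0 < r) :
    IntegrableOn (fun t : ℝ => t ^ (a - 1) * exp (-(r * t))) (Set.Ioi 0) :=
  .of_integral_ne_zero (by rw [integral_rpow_mul_exp_neg_mul_Ioi ha hr]; positivity)

theorem integral_Ioo_pow_mul_one_sub_pow (k m : ℕ) :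
    ∫ x in Set.Ioo (0 : ℝ) 1, x ^ k * (1 - x) ^ m =
      (k.factorial * m.factorial : ℝ) / (k + m + 1).factorial := by
  have hk : 0 < ((k : ℂ) + 1).re := by simp; positivity
  have hm : 0 < ((m : ℂ) + 1).re := by simp; positivity
  have hB := Complex.betaIntegral_eq_Gamma_mul_div _ _ hk hm
  rw [show ((k : ℂ) + 1) + ((m : ℂ) + 1) = ((k + m + 1 : ℕ) : ℂ) + 1 by push_cast; ring,
    Complex.Gamma_nat_eq_factorial, Complex.Gamma_nat_eq_factorial,
    Complex.Gamma_nat_eq_factorial] at hB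
  have hBeta : ((∫ x in Set.Ioo (0 : ℝ) 1, x ^ k * (1 - x) ^ m : ℝ) : ℂ) =
      Complex.betaIntegral ((k : ℂ) + 1) ((m : ℂ) + 1) := by
    rw [← integral_Ioc_eq_integral_Ioo, ← intervalIntegral.integral_of_le zero_le_one,
      Complex.betaIntegral, ← intervalIntegral.integral_ofReal]
    refine intervalIntegral.integral_congr fun x _ => ?_
    simp only [add_sub_cancel_right, Complex.cpow_natCast]
    push_cast
    rfl
  rw [← Complex.ofReal_inj, hBeta, hB]
  push_cast
  rfl

theorem zip_integrand_eq_sum (p m φ : ℕ) (α : ℝ) {θ : ℝ} (hθ : 0 < θ) :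
    (α + (1 - α) * exp (-θ)) ^ p * (1 - α) ^ m * exp (-(m : ℝ) * θ) * θ ^ φ *
        θ ^ (-(1 / 2 : ℝ)) =
      ∑ k ∈ range (p + 1), p.choose k * α ^ k * (1 - α) ^ (p - k + m) *
        (θ ^ ((φ + 1 / 2 : ℝ) - 1) * exp (-((p - k + m : ℕ) * θ))) := by
  have hexp (j : ℕ) : exp (-θ) ^ j = exp (-(j * θ)) := by
    rw [← exp_nat_mul, mul_neg]
  have hrpow : (θ ^ φ : ℝ) * θ ^ (-(1 / 2 : ℝ)) = θ ^ ((φ + 1 / 2 : ℝ) - 1) := by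
    rw [← rpow_natCast, ← rpow_add hθ]
    ring_nf
  calc _ = (α + (1 - α) * exp (-θ)) ^ p * ((1 - α) * exp (-θ)) ^ m *
          (θ ^ φ * θ ^ (-(1 / 2 : ℝ))) := by
        rw [mul_pow, hexp, neg_mul]
        ring
    _ = _ := by
        rw [add_pow_mul_pow, sum_mul, hrpow]
        refine sum_congr rfl fun k _ => ?_
        rw [mul_pow, hexp]
        ring

theorem integral_zip_integrand (p m φ : ℕ) (hm : 0 < m) (α : ℝ) :
    ∫ θ in Set.Ioi (0 : ℝ), (α + (1 - α) * exp (-θ)) ^ p * (1 - α) ^ m *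
        exp (-(m : ℝ) * θ) * θ ^ φ * θ ^ (-(1 / 2 : ℝ)) =
      ∑ k ∈ range (p + 1), (p.choose k * (Gamma (φ + 1 / 2) *
        ((p - k + m : ℕ) : ℝ) ^ (-(φ + 1 / 2 : ℝ)))) * (α ^ k * (1 - α) ^ (p - k + m)) := by
  have hs : (0 : ℝ) < φ + 1 / 2 := by positivity
  have hr (k : ℕ) : (0 : ℝ) < (p - k + m : ℕ) := by positivity
  rw [setIntegral_congr_fun measurableSet_Ioi fun θ hθ => zip_integrand_eq_sum p m φ α hθ,
    integral_finsetSum _ fun k _ =>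
      (integrableOn_rpow_mul_exp_neg_mul_Ioi hs (hr k)).const_mul _]
  refine sum_congr rfl fun k _ => ?_
  rw [integral_const_mul, integral_rpow_mul_exp_neg_mul_Ioi hs (hr k), one_div,
    inv_rpow (hr k).le, ← rpow_neg (hr k).le]
  ring

theorem integral_zip_marginal (p m φ : ℕ) (hm : 0 < m) :
    ∫ α in Set.Ioo (0 : ℝ) 1, ∫ θ in Set.Ioi (0 : ℝ),
        (α + (1 - α) * exp (-θ)) ^ p * (1 - α) ^ m * exp (-(m : ℝ) * θ) * θ ^ φ *
          θ ^ (-(1 / 2 : ℝ)) =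
      (p.factorial / (p + m + 1).factorial : ℝ) *
        ∑ k ∈ range (p + 1), ((p - k + m).factorial / (p - k).factorial : ℝ) *
          Gamma (φ + 1 / 2) * ((p - k + m : ℕ) : ℝ) ^ (-(φ + 1 / 2 : ℝ)) := by
  rw [setIntegral_congr_fun measurableSet_Ioo fun α _ => integral_zip_integrand p m φ hm α,
    integral_finsetSum _ fun k _ => Integrable.const_mul (IntegrableOn.mono_set
      (Continuous.integrableOn_Icc (f := fun α : ℝ => α ^ k * (1 - α) ^ (p - k + m))
        (by fun_prop)) Set.Ioo_subset_Icc_self) _, mul_sum]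
  refine sum_congr rfl fun k hk => ?_
  have hkp : k ≤ p := Nat.lt_succ_iff.mp (mem_range.mp hk)
  rw [integral_const_mul, integral_Ioo_pow_mul_one_sub_pow, Nat.cast_choose ℝ hkp,
    show k + (p - k + m) + 1 = p + m + 1 by omega]
  field_simp

theorem zip_marginal_likelihood_general (n ϖ φ : ℕ) (hϖ : ϖ < n) :
    ∫ α in Set.Ioo (0 : ℝ) 1, ∫ θ in Set.Ioi (0 : ℝ),
        (α + (1 - α) * Real.exp (-θ)) ^ ϖ * (1 - α) ^ (n - ϖ) *
          Real.exp (-((n - ϖ : ℕ) : ℝ) * θ) * θ ^ φ * θ ^ (-(1 / 2 : ℝ)) =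
      ((Nat.factorial ϖ : ℝ) / (Nat.factorial (n + 1) : ℝ)) *
        ∑ j ∈ Finset.range (ϖ + 1),
          ((Nat.factorial (n - j) : ℝ) / (Nat.factorial (ϖ - j) : ℝ)) *
            Real.Gamma ((φ : ℝ) + 1 / 2) *
            ((n - j : ℕ) : ℝ) ^ (-((φ : ℝ) + 1 / 2)) := by
  rw [integral_zip_marginal ϖ (n - ϖ) φ (Nat.sub_pos_of_lt hϖ),
    show ϖ + (n - ϖ) + 1 = n + 1 by omega]
  congr 1
  refine sum_congr rfl fun j hj => ?_
  rw [show ϖ - j + (n - ϖ) = n - j by have := mem_range.mp hj; omega]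

/-- The marginal likelihood integral of the zero-inflated Poisson model under the prior
`θ^{−1/2}·𝟙(0 < α < 1)` equals
`(ϖ!/(n+1)!) · ∑_{j=0}^{ϖ} ((n−j)!/(ϖ−j)!) · Γ(φ + 1/2) · (n − j)^{−(φ + 1/2)}`. -/
theorem zip_marginal_likelihood (n ϖ φ : ℕ) (hn : 1 ≤ n) (hϖ : ϖ < n) (hφ : 1 ≤ φ) :
    ∫ α in Set.Ioo (0 : ℝ) 1, ∫ θ in Set.Ioi (0 : ℝ),
        (α + (1 - α) * Real.exp (-θ)) ^ ϖ * (1 - α) ^ (n - ϖ) *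
          Real.exp (-((n - ϖ : ℕ) : ℝ) * θ) * θ ^ φ * θ ^ (-(1 / 2 : ℝ)) =
      ((Nat.factorial ϖ : ℝ) / (Nat.factorial (n + 1) : ℝ)) *
        ∑ j ∈ Finset.range (ϖ + 1),
          ((Nat.factorial (n - j) : ℝ) / (Nat.factorial (ϖ - j) : ℝ)) *
            Real.Gamma ((φ : ℝ) + 1 / 2) *
            ((n - j : ℕ) : ℝ) ^ (-((φ : ℝ) + 1 / 2)) :=
  zip_marginal_likelihood_general n ϖ φ hϖ
end

section
/- Let γ > 0, let a > 0 be a real number, and let φ ≥ 0 be a real number. Then ∫₀^{∞} (γ/(γ+κ))^{aγ} · (κ/(γ+κ))^{φ} · √(γ/(κ·(γ+κ))) dκ = √γ · B(φ + 1/2, aγ), where B(x, y) = Γ(x)Γ(y)/Γ(x + y) is the Beta function. In particular, with a = n and φ = ∑ᵢ yᵢ this computes the marginal likelihood integral of the negative binomial model under the Jeffreys prior π_J^{NB}(κ) = √(γ/(κ(γ+κ))). -/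
/-!
The substitution `u = κ / (γ + κ)` maps `(0, ∞)` onto `(0, 1)` with `du = γ / (γ + κ)² dκ` and
`1 - u = γ / (γ + κ)`. Since `√(γ / (κ (γ + κ))) = √γ · u^{1/2} / κ`, the integrand becomes
`√γ · u^{φ - 1/2} (1 - u)^{aγ - 1} du`, whose integral is `√γ · B(φ + 1/2, aγ)` by Euler's
Beta integral.
-/

open Real MeasureTheory
open Set ProbabilityTheory

theorem integral_rpow_mul_one_sub_rpow_eq_beta {α β : ℝ} (hα : 0 < α) (hβ : 0 < β) :
    ∫ x in Ioo (0 : ℝ) 1, x ^ (α - 1) * (1 - x) ^ (β - 1) = beta α β := by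
  have hconv := Complex.betaIntegral_convergent (u := α) (v := β) (by simpa) (by simpa)
  rw [beta_eq_betaIntegralReal α β hα hβ, Complex.betaIntegral,
    intervalIntegral.integral_of_le zero_le_one, ← integral_Ioc_eq_integral_Ioo,
    ← RCLike.re_to_complex, ← integral_re ((intervalIntegrable_iff_integrableOn_Ioc_of_le
      zero_le_one).mp hconv)]
  refine setIntegral_congr_fun measurableSet_Ioc fun x ⟨hx0, hx1⟩ ↦ ?_
  have hcast : (x : ℂ) ^ ((α : ℂ) - 1) * (1 - (x : ℂ)) ^ ((β : ℂ) - 1) =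
      ((x ^ (α - 1) * (1 - x) ^ (β - 1) : ℝ) : ℂ) := by
    push_cast
    rw [Complex.ofReal_cpow hx0.le, Complex.ofReal_cpow (sub_nonneg.mpr hx1)]
    push_cast
    rfl
  rw [hcast, RCLike.re_to_complex, Complex.ofReal_re]

theorem integral_Ioo_zero_one_eq_integral_Ioi_div_add {c : ℝ} (hc : 0 < c) (g : ℝ → ℝ) :
    ∫ u in Ioo (0 : ℝ) 1, g u = ∫ κ in Ioi (0 : ℝ), c / (c + κ) ^ 2 * g (κ / (c + κ)) := by
  have himage : (fun κ ↦ κ / (c + κ)) '' Ioi 0 = Ioo 0 1 := by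
    ext u
    constructor
    · rintro ⟨κ, hκ : 0 < κ, rfl⟩
      exact ⟨div_pos hκ (by positivity), (div_lt_one (by positivity)).mpr (by linarith)⟩
    · rintro ⟨hu0, hu1⟩
      have h1u : 0 < 1 - u := by linarith
      refine ⟨c * u / (1 - u), div_pos (mul_pos hc hu0) h1u, ?_⟩
      field_simp
      ring
  have hinj : InjOn (fun κ ↦ κ / (c + κ)) (Ioi 0) := by
    intro κ₁ (h₁ : 0 < κ₁) κ₂ (h₂ : 0 < κ₂) h
    rw [div_eq_div_iff (by positivity) (by positivity)] at h
    nlinarith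
  have hderiv : ∀ κ ∈ Ioi (0 : ℝ),
      HasDerivWithinAt (fun κ ↦ κ / (c + κ)) (c / (c + κ) ^ 2) (Ioi 0) κ := by
    intro κ (hκ : 0 < κ)
    exact ((hasDerivAt_id' κ).div ((hasDerivAt_id' κ).const_add c)
      (by positivity)).hasDerivWithinAt.congr_deriv (by ring)
  rw [← himage, integral_image_eq_integral_abs_deriv_smul measurableSet_Ioi hderiv hinj]
  refine setIntegral_congr_fun measurableSet_Ioi fun κ (hκ : 0 < κ) ↦ ?_
  rw [smul_eq_mul, abs_of_pos (by positivity)]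

theorem integral_Ioi_rpow_mul_rpow_div_eq_beta {c α β : ℝ} (hc : 0 < c) (hα : 0 < α)
    (hβ : 0 < β) :
    ∫ κ in Ioi (0 : ℝ), (κ / (c + κ)) ^ α * (c / (c + κ)) ^ β / κ = beta α β := by
  rw [← integral_rpow_mul_one_sub_rpow_eq_beta hα hβ,
    integral_Ioo_zero_one_eq_integral_Ioi_div_add hc]
  refine setIntegral_congr_fun measurableSet_Ioi fun κ (hκ : 0 < κ) ↦ ?_
  have hcκ : 0 < c + κ := by positivity
  have hsub : 1 - κ / (c + κ) = c / (c + κ) := by field_simp; ring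
  rw [hsub, rpow_sub_one (by positivity), rpow_sub_one (by positivity)]
  field_simp

/-- The marginal likelihood integral of the negative binomial model under the Jeffreys
prior `√(γ/(κ(γ+κ)))` equals `√γ · B(φ + 1/2, aγ)`, where
`B(x, y) = Γ(x)Γ(y)/Γ(x + y)` is the Beta function. -/
theorem nb_marginal_likelihood (γ a φ : ℝ) (hγ : 0 < γ) (ha : 0 < a) (hφ : 0 ≤ φ) :
    ∫ κ in Set.Ioi (0 : ℝ),
        (γ / (γ + κ)) ^ (a * γ) * (κ / (γ + κ)) ^ φ *
          Real.sqrt (γ / (κ * (γ + κ))) =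
      Real.sqrt γ *
        (Real.Gamma (φ + 1 / 2) * Real.Gamma (a * γ) /
          Real.Gamma (φ + 1 / 2 + a * γ)) := by
  have hpointwise : ∀ κ ∈ Ioi (0 : ℝ),
      (γ / (γ + κ)) ^ (a * γ) * (κ / (γ + κ)) ^ φ * √(γ / (κ * (γ + κ))) =
        √γ * ((κ / (γ + κ)) ^ (φ + 1 / 2) * (γ / (γ + κ)) ^ (a * γ) / κ) := by
    intro κ (hκ : 0 < κ)
    have hγκ : 0 < γ + κ := by positivity
    rw [rpow_add (by positivity), rpow_div_two_eq_sqrt _ (div_nonneg hκ.le hγκ.le), rpow_one,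
      show γ / (κ * (γ + κ)) = γ * (κ / (γ + κ)) / κ ^ 2 by field_simp, sqrt_div' _ (sq_nonneg κ),
      sqrt_mul hγ.le, sqrt_sq hκ.le]
    ring
  rw [setIntegral_congr_fun measurableSet_Ioi hpointwise, integral_const_mul,
    integral_Ioi_rpow_mul_rpow_div_eq_beta hγ (by positivity) (by positivity)]
  rfl
end

section
/- Let γ > 0, let n ≥ 1, and let ϖ, φ be natural numbers with 0 ≤ ϖ < n and φ ≥ 1. Then the marginal likelihood integral of the zero-inflated negative binomial model under the prior √(γ/(κ(γ+κ)))·𝟙(0 < α < 1) satisfies ∫₀^{1} ∫₀^{∞} (α + (1 − α)·(1 + κ/γ)^{−γ})^{ϖ} · (1 − α)^{n−ϖ} · (γ/(γ+κ))^{(n−ϖ)γ} · (κ/(γ+κ))^{φ} · √(γ/(κ·(γ+κ))) dκ dα = (ϖ!·√γ/(n+1)!) · ∑_{j=0}^{ϖ} ((n−j)!/(ϖ−j)!) · B(φ + 1/2, (n − j)·γ), where B(x, y) = Γ(x)Γ(y)/Γ(x + y) is the Beta function. -/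
/-!
With `x = γ / (γ + κ)` we have `(1 + κ / γ) ^ (-γ) = x ^ γ`, so expanding the `ϖ`-th power
binomially splits the integrand into the terms `C(ϖ, j) α ^ j (1 - α) ^ (n - j)` times
`x ^ ((n - j) γ) (κ / (γ + κ)) ^ φ √(γ / (κ (γ + κ)))`. The substitution `κ = γ t / (1 - t)`,
under which `x = 1 - t` and `κ / (γ + κ) = t`, turns each `κ`-integral into the Beta integral
`√γ B(φ + 1/2, (n - j) γ)`, and the `α`-integrals are the Beta integrals
`j! (n - j)! / (n + 1)!`.
-/

open Real Finset MeasureTheory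
open ProbabilityTheory (beta beta_eq_betaIntegralReal)

lemma ofReal_rpow_mul_one_sub_rpow {a b t : ℝ} (ht : t ∈ Set.Ioo (0 : ℝ) 1) :
    ((t ^ (a - 1) * (1 - t) ^ (b - 1) : ℝ) : ℂ) =
      (t : ℂ) ^ ((a : ℂ) - 1) * (1 - (t : ℂ)) ^ ((b : ℂ) - 1) := by
  have h1t : 0 ≤ 1 - t := by linarith [ht.2]
  rw [Complex.ofReal_mul, Complex.ofReal_cpow ht.1.le, Complex.ofReal_cpow h1t]
  push_cast
  rfl

lemma integrableOn_rpow_mul_one_sub_rpow {a b : ℝ} (ha : 0 < a) (hb : 0 < b) :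
    IntegrableOn (fun t : ℝ => t ^ (a - 1) * (1 - t) ^ (b - 1)) (Set.Ioo 0 1) := by
  have hcpow : IntegrableOn (fun t : ℝ => (t : ℂ) ^ ((a : ℂ) - 1) * (1 - (t : ℂ)) ^ ((b : ℂ) - 1))
      (Set.Ioo 0 1) :=
    ((intervalIntegrable_iff_integrableOn_Ioc_of_le zero_le_one).mp
      (Complex.betaIntegral_convergent (by simpa using ha) (by simpa using hb))).mono_set
      Set.Ioo_subset_Ioc_self
  rw [← integrableOn_congr_fun (fun t ht => ofReal_rpow_mul_one_sub_rpow ht) measurableSet_Ioo]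
    at hcpow
  exact hcpow.re

lemma integral_rpow_mul_one_sub_rpow {a b : ℝ} (ha : 0 < a) (hb : 0 < b) :
    ∫ t in Set.Ioo (0 : ℝ) 1, t ^ (a - 1) * (1 - t) ^ (b - 1) = beta a b := by
  have hbeta : Complex.betaIntegral a b =
      ((∫ t in Set.Ioo (0 : ℝ) 1, t ^ (a - 1) * (1 - t) ^ (b - 1) : ℝ) : ℂ) := by
    rw [Complex.betaIntegral, intervalIntegral.integral_of_le zero_le_one,
      integral_Ioc_eq_integral_Ioo, ← integral_complex_ofReal]
    exact setIntegral_congr_fun measurableSet_Ioo fun t ht => (ofReal_rpow_mul_one_sub_rpow ht).symm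
  rw [beta_eq_betaIntegralReal a b ha hb, hbeta, Complex.ofReal_re]

lemma integral_pow_mul_one_sub_pow (a b : ℕ) :
    ∫ t in Set.Ioo (0 : ℝ) 1, t ^ a * (1 - t) ^ b =
      (a.factorial * b.factorial / (a + b + 1).factorial : ℝ) := by
  have h := integral_rpow_mul_one_sub_rpow (a := a + 1) (b := b + 1) (by positivity)
    (by positivity)
  simp only [add_sub_cancel_right, rpow_natCast] at h
  rw [h, beta, show (a : ℝ) + 1 + (b + 1) = ((a + b + 1 : ℕ) : ℝ) + 1 by
    push_cast; ring]
  simp only [Gamma_nat_eq_factorial]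

lemma image_mul_div_one_sub_Ioo {c : ℝ} (hc : 0 < c) :
    (fun t : ℝ => c * t / (1 - t)) '' Set.Ioo 0 1 = Set.Ioi 0 := by
  ext x
  constructor
  · rintro ⟨t, ⟨ht0, ht1⟩, rfl⟩
    exact div_pos (mul_pos hc ht0) (sub_pos.mpr ht1)
  · intro (hx : 0 < x)
    have hcx : 0 < c + x := by linarith
    refine ⟨x / (c + x), ⟨by positivity, (div_lt_one hcx).mpr (by linarith)⟩, ?_⟩
    field_simp
    simp [hc.ne']

lemma injOn_mul_div_one_sub {c : ℝ} (hc : c ≠ 0) :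
    Set.InjOn (fun t : ℝ => c * t / (1 - t)) (Set.Iio 1) := by
  intro s (hs : s < 1) t (ht : t < 1) h
  rw [div_eq_div_iff (sub_pos.mpr hs).ne' (sub_pos.mpr ht).ne'] at h
  exact mul_left_cancel₀ hc (by linear_combination h)

lemma hasDerivAt_mul_div_one_sub (c : ℝ) {t : ℝ} (ht : t ≠ 1) :
    HasDerivAt (fun t : ℝ => c * t / (1 - t)) (c / (1 - t) ^ 2) t := by
  have h1t : 1 - t ≠ 0 := sub_ne_zero.mpr ht.symm
  refine (((hasDerivAt_id' t).const_mul c).div ((hasDerivAt_id' t).const_sub 1) h1t).congr_deriv ?_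
  ring

section Substitution

variable {E : Type*} [NormedAddCommGroup E] [NormedSpace ℝ E] {c : ℝ}

lemma hasDerivWithinAt_mul_div_one_sub_Ioo :
    ∀ t ∈ Set.Ioo (0 : ℝ) 1, HasDerivWithinAt (fun s : ℝ => c * s / (1 - s)) (c / (1 - t) ^ 2)
      (Set.Ioo 0 1) t :=
  fun _ ht => (hasDerivAt_mul_div_one_sub c ht.2.ne).hasDerivWithinAt

lemma integrableOn_Ioi_iff_comp_mul_div_one_sub (hc : 0 < c) (f : ℝ → E) :
    IntegrableOn f (Set.Ioi 0) ↔
      IntegrableOn (fun t => (c / (1 - t) ^ 2) • f (c * t / (1 - t))) (Set.Ioo 0 1) := by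
  rw [← image_mul_div_one_sub_Ioo hc, integrableOn_image_iff_integrableOn_abs_deriv_smul
    measurableSet_Ioo hasDerivWithinAt_mul_div_one_sub_Ioo
    ((injOn_mul_div_one_sub hc.ne').mono fun t ht => ht.2)]
  simp only [abs_of_nonneg (div_nonneg hc.le (sq_nonneg _))]

lemma integral_Ioi_eq_integral_comp_mul_div_one_sub (hc : 0 < c) (f : ℝ → E) :
    ∫ x in Set.Ioi 0, f x = ∫ t in Set.Ioo 0 1, (c / (1 - t) ^ 2) • f (c * t / (1 - t)) := by
  rw [← image_mul_div_one_sub_Ioo hc, integral_image_eq_integral_abs_deriv_smul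
    measurableSet_Ioo hasDerivWithinAt_mul_div_one_sub_Ioo
    ((injOn_mul_div_one_sub hc.ne').mono fun t ht => ht.2)]
  simp only [abs_of_nonneg (div_nonneg hc.le (sq_nonneg _))]

end Substitution

lemma negBinomial_jeffreys_comp_mul_div_one_sub {γ s t κ : ℝ} (hγ : 0 < γ)
    (ht : t ∈ Set.Ioo (0 : ℝ) 1) (φ : ℕ) (hκ : κ = γ * t / (1 - t)) :
    γ / (1 - t) ^ 2 * ((γ / (γ + κ)) ^ s * (κ / (γ + κ)) ^ φ * √(γ / (κ * (γ + κ)))) =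
      √γ * (t ^ ((φ : ℝ) + 1 / 2 - 1) * (1 - t) ^ (s - 1)) := by
  obtain ⟨ht0, ht1⟩ := ht
  have h1t : 0 < 1 - t := sub_pos.mpr ht1
  have hsum : γ + κ = γ / (1 - t) := by
    rw [hκ]
    field_simp
    ring
  have hγ_div : γ / (γ + κ) = 1 - t := by
    rw [hsum]
    field_simp
  have hκ_div : κ / (γ + κ) = t := by
    rw [hsum, hκ]
    field_simp
  have hsqrt : √(γ / (κ * (γ + κ))) = (1 - t) / (√γ * √t) := by
    rw [hsum, hκ, show γ / (γ * t / (1 - t) * (γ / (1 - t))) = (1 - t) ^ 2 / (γ * t) by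
      field_simp, sqrt_div' _ (by positivity), sqrt_sq h1t.le, sqrt_mul hγ.le]
  have ht_rpow : t ^ ((φ : ℝ) + 1 / 2 - 1) = t ^ φ / √t := by
    rw [show (φ : ℝ) + 1 / 2 - 1 = φ - 1 / 2 by ring, rpow_sub ht0, rpow_natCast, sqrt_eq_rpow]
  have h1t_rpow : (1 - t) ^ (s - 1) = (1 - t) ^ s / (1 - t) := by
    rw [rpow_sub h1t, rpow_one]
  have hγ_sq : √γ ^ 2 = γ := sq_sqrt hγ.le
  rw [hγ_div, hκ_div, hsqrt, ht_rpow, h1t_rpow]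
  field_simp
  rw [hγ_sq]

section NegBinomialJeffreys

variable {γ s : ℝ}

lemma integrableOn_negBinomial_jeffreys (hγ : 0 < γ) (hs : 0 < s) (φ : ℕ) :
    IntegrableOn (fun κ => (γ / (γ + κ)) ^ s * (κ / (γ + κ)) ^ φ * √(γ / (κ * (γ + κ))))
      (Set.Ioi 0) := by
  rw [integrableOn_Ioi_iff_comp_mul_div_one_sub hγ]
  refine IntegrableOn.congr_fun
    ((integrableOn_rpow_mul_one_sub_rpow (a := φ + 1 / 2) (by positivity) hs).const_mul √γ)
    (fun t ht => ?_) measurableSet_Ioo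
  rw [smul_eq_mul, negBinomial_jeffreys_comp_mul_div_one_sub hγ ht φ rfl]

lemma integral_negBinomial_jeffreys (hγ : 0 < γ) (hs : 0 < s) (φ : ℕ) :
    ∫ κ in Set.Ioi 0, (γ / (γ + κ)) ^ s * (κ / (γ + κ)) ^ φ * √(γ / (κ * (γ + κ))) =
      √γ * beta (φ + 1 / 2) s := by
  rw [integral_Ioi_eq_integral_comp_mul_div_one_sub hγ, ← integral_rpow_mul_one_sub_rpow
    (by positivity) hs, ← integral_const_mul]
  exact setIntegral_congr_fun measurableSet_Ioo fun t ht =>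
    negBinomial_jeffreys_comp_mul_div_one_sub hγ ht φ rfl

end NegBinomialJeffreys

lemma one_add_div_rpow_neg {γ κ : ℝ} (hγ : 0 < γ) (hκ : 0 ≤ κ) (r : ℝ) :
    (1 + κ / γ) ^ (-r) = (γ / (γ + κ)) ^ r := by
  rw [rpow_neg (by positivity), ← inv_rpow (by positivity)]
  congr 1
  field_simp

lemma add_mul_rpow_pow_mul_rpow_eq_sum (a b : ℝ) {x : ℝ} (hx : 0 < x) (γ : ℝ) {m n : ℕ}
    (hmn : m ≤ n) :
    (a + b * x ^ γ) ^ m * b ^ (n - m) * x ^ (((n - m : ℕ) : ℝ) * γ) =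
      ∑ j ∈ range (m + 1),
        (m.choose j : ℝ) * a ^ j * b ^ (n - j) * x ^ (((n - j : ℕ) : ℝ) * γ) := by
  rw [add_pow, sum_mul, sum_mul]
  refine sum_congr rfl fun j hj => ?_
  have hjm : j ≤ m := Nat.lt_succ_iff.mp (mem_range.mp hj)
  have hb : b ^ (m - j) * b ^ (n - m) = b ^ (n - j) := by
    rw [← pow_add]
    congr 1
    omega
  have hx_pow : (x ^ γ) ^ (m - j) * x ^ (((n - m : ℕ) : ℝ) * γ) = x ^ (((n - j : ℕ) : ℝ) * γ) := by
    rw [← rpow_natCast, ← rpow_mul hx.le, ← rpow_add hx, Nat.cast_sub hjm, Nat.cast_sub hmn,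
      Nat.cast_sub (hjm.trans hmn)]
    ring_nf
  rw [← hb, ← hx_pow, mul_pow]
  ring

lemma integral_choose_mul_pow_mul_one_sub_pow {j m n : ℕ} (hjm : j ≤ m) (hmn : m ≤ n) :
    ∫ α in Set.Ioo (0 : ℝ) 1, (m.choose j : ℝ) * α ^ j * (1 - α) ^ (n - j) =
      m.factorial / (n + 1).factorial * ((n - j).factorial / (m - j).factorial : ℝ) := by
  simp only [mul_assoc]
  rw [integral_const_mul, integral_pow_mul_one_sub_pow, Nat.cast_choose ℝ hjm,
    show j + (n - j) + 1 = n + 1 by omega]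
  field_simp

lemma integral_zinb_jeffreys_Ioi {γ : ℝ} (hγ : 0 < γ) {m n : ℕ} (hmn : m < n) (φ : ℕ) (α : ℝ) :
    ∫ κ in Set.Ioi 0, (α + (1 - α) * (1 + κ / γ) ^ (-γ)) ^ m * (1 - α) ^ (n - m) *
        (γ / (γ + κ)) ^ (((n - m : ℕ) : ℝ) * γ) * (κ / (γ + κ)) ^ φ * √(γ / (κ * (γ + κ))) =
      ∑ j ∈ range (m + 1), (m.choose j : ℝ) * α ^ j * (1 - α) ^ (n - j) *
        (√γ * beta (φ + 1 / 2) (((n - j : ℕ) : ℝ) * γ)) := by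
  have hpos : ∀ j ∈ range (m + 1), 0 < ((n - j : ℕ) : ℝ) * γ := fun j hj => by
    have := mem_range.mp hj
    exact mul_pos (Nat.cast_pos.mpr (by omega)) hγ
  calc _ = ∫ κ in Set.Ioi 0, ∑ j ∈ range (m + 1), (m.choose j : ℝ) * α ^ j * (1 - α) ^ (n - j) *
          ((γ / (γ + κ)) ^ (((n - j : ℕ) : ℝ) * γ) * (κ / (γ + κ)) ^ φ * √(γ / (κ * (γ + κ)))) :=
        setIntegral_congr_fun measurableSet_Ioi fun κ (hκ : 0 < κ) => by
          rw [one_add_div_rpow_neg hγ hκ.le, add_mul_rpow_pow_mul_rpow_eq_sum _ _ (by positivity) _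
            hmn.le, sum_mul, sum_mul]
          exact sum_congr rfl fun j _ => by ring
    _ = _ := by
      rw [integral_finsetSum _ fun j hj =>
        (integrableOn_negBinomial_jeffreys hγ (hpos j hj) φ).const_mul _]
      exact sum_congr rfl fun j hj => by
        rw [integral_const_mul, integral_negBinomial_jeffreys hγ (hpos j hj)]

theorem zinb_marginal_likelihood_general (γ : ℝ) (hγ : 0 < γ) (n ϖ φ : ℕ)
    (hϖ : ϖ < n) :
    ∫ α in Set.Ioo (0 : ℝ) 1, ∫ κ in Set.Ioi (0 : ℝ),
        (α + (1 - α) * (1 + κ / γ) ^ (-γ)) ^ ϖ * (1 - α) ^ (n - ϖ) *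
          (γ / (γ + κ)) ^ (((n - ϖ : ℕ) : ℝ) * γ) * (κ / (γ + κ)) ^ φ *
          Real.sqrt (γ / (κ * (γ + κ))) =
      ((Nat.factorial ϖ : ℝ) * Real.sqrt γ / (Nat.factorial (n + 1) : ℝ)) *
        ∑ j ∈ Finset.range (ϖ + 1),
          ((Nat.factorial (n - j) : ℝ) / (Nat.factorial (ϖ - j) : ℝ)) *
            (Real.Gamma ((φ : ℝ) + 1 / 2) * Real.Gamma (((n - j : ℕ) : ℝ) * γ) /
              Real.Gamma ((φ : ℝ) + 1 / 2 + ((n - j : ℕ) : ℝ) * γ)) := by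
  have hpoly (j : ℕ) : IntegrableOn (fun α : ℝ => (ϖ.choose j : ℝ) * α ^ j * (1 - α) ^ (n - j))
      (Set.Ioo 0 1) :=
    (Continuous.integrableOn_Icc (by fun_prop)).mono_set Set.Ioo_subset_Icc_self
  simp only [integral_zinb_jeffreys_Ioi hγ hϖ φ]
  rw [integral_finsetSum _ fun j _ => Integrable.mul_const (hpoly j) _, mul_sum]
  refine sum_congr rfl fun j hj => ?_
  rw [integral_mul_const, integral_choose_mul_pow_mul_one_sub_pow
    (Nat.lt_succ_iff.mp (mem_range.mp hj)) hϖ.le, beta]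
  ring

/-- The marginal likelihood integral of the zero-inflated negative binomial model under
the prior `√(γ/(κ(γ+κ)))·𝟙(0 < α < 1)` equals
`(ϖ!·√γ/(n+1)!) · ∑_{j=0}^{ϖ} ((n−j)!/(ϖ−j)!) · B(φ + 1/2, (n − j)·γ)`, where
`B(x, y) = Γ(x)Γ(y)/Γ(x + y)` is the Beta function. -/
theorem zinb_marginal_likelihood (γ : ℝ) (hγ : 0 < γ) (n ϖ φ : ℕ) (hn : 1 ≤ n)
    (hϖ : ϖ < n) (hφ : 1 ≤ φ) :
    ∫ α in Set.Ioo (0 : ℝ) 1, ∫ κ in Set.Ioi (0 : ℝ),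
        (α + (1 - α) * (1 + κ / γ) ^ (-γ)) ^ ϖ * (1 - α) ^ (n - ϖ) *
          (γ / (γ + κ)) ^ (((n - ϖ : ℕ) : ℝ) * γ) * (κ / (γ + κ)) ^ φ *
          Real.sqrt (γ / (κ * (γ + κ))) =
      ((Nat.factorial ϖ : ℝ) * Real.sqrt γ / (Nat.factorial (n + 1) : ℝ)) *
        ∑ j ∈ Finset.range (ϖ + 1),
          ((Nat.factorial (n - j) : ℝ) / (Nat.factorial (ϖ - j) : ℝ)) *
            (Real.Gamma ((φ : ℝ) + 1 / 2) * Real.Gamma (((n - j : ℕ) : ℝ) * γ) /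
              Real.Gamma ((φ : ℝ) + 1 / 2 + ((n - j : ℕ) : ℝ) * γ)) :=
  zinb_marginal_likelihood_general γ hγ n ϖ φ hϖ
end

section
/- Fix an integer n ≥ 2 and a real number φ ≥ 0. For a natural number ϖ with 0 ≤ ϖ ≤ n − 1, define β(ϖ) = (ϖ!/(n+1)!) · ∑_{j=0}^{ϖ} ((n−j)!/(ϖ−j)!) · (1 − j/n)^{−(φ + 1/2)}. Then β is strictly increasing in ϖ on {0, 1, …, n − 1}: for 0 ≤ ϖ₁ < ϖ₂ ≤ n − 1 one has β(ϖ₁) < β(ϖ₂). -/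
/-!
Since `m!/(m-j)!` is the falling factorial `m(m-1)⋯(m-j+1)`, `(n+1)! β(m)` is
`∑_{j ≤ m} m(m-1)⋯(m-j+1) w_j` with weights `w_j = (n-j)! (1 - j/n)^c`, which are positive for
`j < n` whatever the sign of `c`. Passing from `m` to `m+1` does not decrease any falling factorial
and adds the positive term `(m+1)! w_{m+1}`.
-/

open Real Finset

section DescFactorialSum

variable {R : Type*} [Semiring R] [PartialOrder R] [IsStrictOrderedRing R]

theorem sum_descFactorial_mul_lt_succ {a : ℕ → R} {m : ℕ} (ha : ∀ j ≤ m, 0 ≤ a j)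
    (ha' : 0 < a (m + 1)) :
    ∑ j ∈ range (m + 1), (m.descFactorial j : R) * a j <
      ∑ j ∈ range (m + 1 + 1), ((m + 1).descFactorial j : R) * a j := by
  rw [sum_range_succ _ (m + 1), Nat.descFactorial_self]
  refine lt_add_of_le_of_pos (sum_le_sum fun j hj ↦ ?_) (mul_pos (by positivity) ha')
  have hj : j ≤ m := Nat.lt_succ_iff.mp (mem_range.mp hj)
  exact mul_le_mul_of_nonneg_right (by exact_mod_cast Nat.descFactorial_le j m.le_succ) (ha j hj)

theorem strictMonoOn_sum_descFactorial_mul {a : ℕ → R} {N : ℕ} (ha : ∀ j ≤ N, 0 < a j) :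
    StrictMonoOn (fun m ↦ ∑ j ∈ range (m + 1), (m.descFactorial j : R) * a j) (Set.Iic N) :=
  strictMonoOn_Iic_of_lt_succ fun m hm ↦ by
    rw [Order.succ_eq_add_one]
    exact sum_descFactorial_mul_lt_succ (fun j hj ↦ (ha j (by omega)).le) (ha (m + 1) hm)

end DescFactorialSum

theorem cast_factorial_div_factorial_sub_eq_descFactorial {K : Type*} [DivisionRing K]
    [CharZero K] {m j : ℕ} (h : j ≤ m) :
    (m.factorial : K) / (m - j).factorial = m.descFactorial j := by
  rw [div_eq_iff (Nat.cast_ne_zero.mpr (Nat.factorial_ne_zero _)),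
    ← Nat.factorial_mul_descFactorial h, Nat.cast_mul, Nat.cast_comm]

/-- The Bayes factor `β(m)`, with the exponent `-(φ + 1/2)` replaced by an arbitrary `c`. -/
noncomputable def zipBayesFactor (n : ℕ) (c : ℝ) (m : ℕ) : ℝ :=
  ((m.factorial : ℝ) / ((n + 1).factorial : ℝ)) *
    ∑ j ∈ range (m + 1),
      (((n - j).factorial : ℝ) / ((m - j).factorial : ℝ)) * (1 - (j : ℝ) / n) ^ c

theorem zipBayesFactor_eq (n : ℕ) (c : ℝ) (m : ℕ) :
    zipBayesFactor n c m = ((n + 1).factorial : ℝ)⁻¹ *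
      ∑ j ∈ range (m + 1),
        (m.descFactorial j : ℝ) * ((n - j).factorial * (1 - (j : ℝ) / n) ^ c) := by
  rw [zipBayesFactor, div_mul_eq_mul_div, div_eq_inv_mul, mul_sum]
  congr 1
  refine sum_congr rfl fun j hj ↦ ?_
  rw [← cast_factorial_div_factorial_sub_eq_descFactorial (Nat.lt_succ_iff.mp (mem_range.mp hj))]
  ring

theorem one_sub_div_pos {j n : ℕ} (h : j < n) : (0 : ℝ) < 1 - j / n := by
  have hn : (0 : ℝ) < n := by exact_mod_cast h.pos
  rw [sub_pos, div_lt_one hn]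
  exact_mod_cast h

theorem strictMonoOn_zipBayesFactor {n : ℕ} (hn : 0 < n) (c : ℝ) :
    StrictMonoOn (zipBayesFactor n c) (Set.Iic (n - 1)) := by
  have hβ := strictMonoOn_sum_descFactorial_mul (R := ℝ)
    (a := fun j ↦ (n - j).factorial * (1 - (j : ℝ) / n) ^ c) (N := n - 1)
    fun j hj ↦ mul_pos (by positivity) (rpow_pos_of_pos (one_sub_div_pos (by omega)) c)
  intro m₁ hm₁ m₂ hm₂ h
  rw [zipBayesFactor_eq, zipBayesFactor_eq]
  exact mul_lt_mul_of_pos_left (hβ hm₁ hm₂ h) (by positivity)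

theorem zip_bayes_factor_strictMono_in_zero_count_general (n : ℕ) (φ : ℝ)
    (ϖ₁ ϖ₂ : ℕ) (h₁₂ : ϖ₁ < ϖ₂) (h₂ : ϖ₂ ≤ n - 1) :
    ((Nat.factorial ϖ₁ : ℝ) / (Nat.factorial (n + 1) : ℝ)) *
        ∑ j ∈ Finset.range (ϖ₁ + 1),
          ((Nat.factorial (n - j) : ℝ) / (Nat.factorial (ϖ₁ - j) : ℝ)) *
            (1 - (j : ℝ) / (n : ℝ)) ^ (-(φ + 1 / 2)) <
      ((Nat.factorial ϖ₂ : ℝ) / (Nat.factorial (n + 1) : ℝ)) *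
        ∑ j ∈ Finset.range (ϖ₂ + 1),
          ((Nat.factorial (n - j) : ℝ) / (Nat.factorial (ϖ₂ - j) : ℝ)) *
            (1 - (j : ℝ) / (n : ℝ)) ^ (-(φ + 1 / 2)) :=
  strictMonoOn_zipBayesFactor (by omega) (-(φ + 1 / 2))
    (h₁₂.le.trans h₂ : ϖ₁ ≤ n - 1) h₂ h₁₂

/-- For fixed `n ≥ 2` and `φ ≥ 0`, the Bayes factor of ZIP against Poisson,
`β(ϖ) = (ϖ!/(n+1)!) · ∑_{j=0}^{ϖ} ((n−j)!/(ϖ−j)!) · (1 − j/n)^{−(φ + 1/2)}`,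
is strictly increasing in the number of zero observations `ϖ ∈ {0, 1, …, n − 1}`. -/
theorem zip_bayes_factor_strictMono_in_zero_count (n : ℕ) (hn : 2 ≤ n) (φ : ℝ)
    (hφ : 0 ≤ φ) (ϖ₁ ϖ₂ : ℕ) (h₁₂ : ϖ₁ < ϖ₂) (h₂ : ϖ₂ ≤ n - 1) :
    ((Nat.factorial ϖ₁ : ℝ) / (Nat.factorial (n + 1) : ℝ)) *
        ∑ j ∈ Finset.range (ϖ₁ + 1),
          ((Nat.factorial (n - j) : ℝ) / (Nat.factorial (ϖ₁ - j) : ℝ)) *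
            (1 - (j : ℝ) / (n : ℝ)) ^ (-(φ + 1 / 2)) <
      ((Nat.factorial ϖ₂ : ℝ) / (Nat.factorial (n + 1) : ℝ)) *
        ∑ j ∈ Finset.range (ϖ₂ + 1),
          ((Nat.factorial (n - j) : ℝ) / (Nat.factorial (ϖ₂ - j) : ℝ)) *
            (1 - (j : ℝ) / (n : ℝ)) ^ (-(φ + 1 / 2)) :=
  zip_bayes_factor_strictMono_in_zero_count_general n φ ϖ₁ ϖ₂ h₁₂ h₂
end
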